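/- Every path from u_0 to w_{N−1} in the max-plus gadget graph H with total weight strictly less than 15W equals, for some ℓ ∈ {1,…,M} and i, j, k ∈ {0,…,N−1}, the path with vertex sequence u_0, u_1, …, u_i, x_ℓ, v_j, v_{j−1}, …, v_0, w_k, w_{k+1}, …, w_{N−1}. -/

import Mathlib

/-!
The potential `φ = 13W` on `U`, `9W` on `X`, `5W` on `V` and `0` on `W` is feasible: every edge
has nonnegative reduced cost `w(x, y) - φ x + φ y`. A walk from `u_0` to `w_{N-1}` therefore weighs
`13W` plus the reduced costs of its edges, so a walk of weight `< 15W` only uses edges of reduced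
cost `< 2W`. Every edge traversed against the order `U, X, V, W` has reduced cost at least `8W`,
so such a walk visits the layers in this order; being a path, it climbs `U` from `u_0`, crosses
`X` once, descends `V` to `v_0` (the only vertex of `V` joined to `W`) and climbs `W` to `w_{N-1}`.
-/

/-- Vertex set of the max-plus gadget graph: `U ⊕ V ⊕ W ⊕ X`. -/
abbrev MPVert (N M : ℕ) := (Fin N ⊕ Fin N) ⊕ (Fin N ⊕ Fin M)

/-- Vertex `u_i`. -/
def vu (N M : ℕ) (i : Fin N) : MPVert N M := Sum.inl (Sum.inl i)
/-- Vertex `v_j`. -/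
def vv (N M : ℕ) (j : Fin N) : MPVert N M := Sum.inl (Sum.inr j)
/-- Vertex `w_k`. -/
def vw (N M : ℕ) (k : Fin N) : MPVert N M := Sum.inr (Sum.inl k)
/-- Vertex `x_ℓ`. -/
def vx (N M : ℕ) (l : Fin M) : MPVert N M := Sum.inr (Sum.inr l)

/-- Adjacency (as a `Bool`) of the max-plus gadget graph. -/
def mpAdjB (N M : ℕ) : MPVert N M → MPVert N M → Bool
  | Sum.inl (Sum.inl i), Sum.inl (Sum.inl i') => i.val + 1 == i'.val || i'.val + 1 == i.val
  | Sum.inl (Sum.inr j), Sum.inl (Sum.inr j') => j.val + 1 == j'.val || j'.val + 1 == j.val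
  | Sum.inr (Sum.inl k), Sum.inr (Sum.inl k') => k.val + 1 == k'.val || k'.val + 1 == k.val
  | Sum.inl (Sum.inl _), Sum.inr (Sum.inr _) => true
  | Sum.inr (Sum.inr _), Sum.inl (Sum.inl _) => true
  | Sum.inr (Sum.inr _), Sum.inl (Sum.inr _) => true
  | Sum.inl (Sum.inr _), Sum.inr (Sum.inr _) => true
  | Sum.inl (Sum.inr j), Sum.inr (Sum.inl _) => j.val == 0
  | Sum.inr (Sum.inl _), Sum.inl (Sum.inr j) => j.val == 0
  | _, _ => false

/-- The max-plus gadget graph. -/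
def mpGraph (N M : ℕ) : SimpleGraph (MPVert N M) where
  Adj x y := mpAdjB N M x y = true
  symm := by
    constructor
    rintro ((i | j) | (k | l)) ((i' | j') | (k' | l')) h <;>
      simp_all [mpAdjB] <;> omega
  loopless := by
    constructor
    rintro ((i | j) | (k | l)) h <;> simp_all [mpAdjB]

/-- The edge weights of the max-plus gadget graph. -/
def mpW (N M : ℕ) (W : ℤ) (a b : Fin M → Fin N → ℤ) (c : Fin N → ℤ) :
    MPVert N M → MPVert N M → ℤ
  | Sum.inl (Sum.inl i), Sum.inr (Sum.inr l) => 5 * W - a l i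
  | Sum.inr (Sum.inr l), Sum.inl (Sum.inl i) => 5 * W - a l i
  | Sum.inr (Sum.inr l), Sum.inl (Sum.inr j) => 5 * W - b l j
  | Sum.inl (Sum.inr j), Sum.inr (Sum.inr l) => 5 * W - b l j
  | Sum.inl (Sum.inr _), Sum.inr (Sum.inl k) => 5 * W + c k
  | Sum.inr (Sum.inl k), Sum.inl (Sum.inr _) => 5 * W + c k
  | _, _ => 0

/-- The total weight of a walk: the sum of the weights of its edges, with multiplicity. -/
def walkWeight {V : Type*} {G : SimpleGraph V} (w : V → V → ℤ) {s t : V}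
    (p : G.Walk s t) : ℤ :=
  (p.darts.map fun d => w d.toProd.1 d.toProd.2).sum

namespace List

theorem finRange_drop_eq_cons {n k : ℕ} (hk : k < n) :
    (finRange n).drop k = ⟨k, hk⟩ :: (finRange n).drop (k + 1) := by
  rw [drop_eq_getElem_cons (by simpa using hk), getElem_finRange]
  rfl

theorem finRange_take_add_one {n k : ℕ} (hk : k < n) :
    (finRange n).take (k + 1) = (finRange n).take k ++ [⟨k, hk⟩] := by
  rw [take_add_one, getElem?_eq_getElem (by simpa using hk), getElem_finRange]
  rfl

theorem mem_finRange_take_iff {n k : ℕ} {i : Fin n} :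
    i ∈ (finRange n).take k ↔ (i : ℕ) < k := by
  simp [mem_take_iff_getElem, Fin.ext_iff]

theorem mem_finRange_drop_iff {n k : ℕ} {i : Fin n} :
    i ∈ (finRange n).drop k ↔ k ≤ (i : ℕ) := by
  simp only [mem_drop_iff_getElem, length_finRange, getElem_finRange, Fin.ext_iff,
    Fin.val_cast]
  exact ⟨fun ⟨j, _, hj⟩ => by omega, fun h => ⟨i - k, by omega, by omega⟩⟩

end List

section Potential

variable {V : Type*} {G : SimpleGraph V}

@[simp]
theorem walkWeight_nil (w : V → V → ℤ) {s : V} :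
    walkWeight w (SimpleGraph.Walk.nil : G.Walk s s) = 0 :=
  rfl

@[simp]
theorem walkWeight_cons (w : V → V → ℤ) {s y t : V} (h : G.Adj s y) (q : G.Walk y t) :
    walkWeight w (.cons h q) = w s y + walkWeight w q := by
  simp [walkWeight]

def reducedCost (w : V → V → ℤ) (φ : V → ℤ) (x y : V) : ℤ :=
  w x y - φ x + φ y

theorem walkWeight_eq_sub_add_walkWeight_reducedCost (w : V → V → ℤ) (φ : V → ℤ) {s t : V}
    (p : G.Walk s t) :
    walkWeight w p = φ s - φ t + walkWeight (reducedCost w φ) p := by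
  induction p with
  | nil => simp
  | cons h q ih => simp only [walkWeight_cons, reducedCost, ih]; ring

theorem weight_dart_le_walkWeight {w : V → V → ℤ} (hw : ∀ x y, G.Adj x y → 0 ≤ w x y) {s t : V}
    (p : G.Walk s t) {d : G.Dart} (hd : d ∈ p.darts) :
    w d.fst d.snd ≤ walkWeight w p :=
  List.single_le_sum (by simpa using fun d _ => hw _ _ d.adj) _ (List.mem_map_of_mem hd)

end Potential

namespace MaxPlusGadget

variable {N M : ℕ} {W : ℤ} {a b : Fin M → Fin N → ℤ} {c : Fin N → ℤ}

def potential (W : ℤ) : MPVert N M → ℤ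
  | .inl (.inl _) => 13 * W
  | .inl (.inr _) => 5 * W
  | .inr (.inl _) => 0
  | .inr (.inr _) => 9 * W

def layer : MPVert N M → ℕ
  | .inl (.inl _) => 0
  | .inr (.inr _) => 1
  | .inl (.inr _) => 2
  | .inr (.inl _) => 3

theorem reducedCost_nonneg (ha : ∀ l i, 0 ≤ a l i ∧ a l i ≤ W) (hb : ∀ l j, 0 ≤ b l j ∧ b l j ≤ W)
    (hc : ∀ k, 0 ≤ c k ∧ c k ≤ W) {x y : MPVert N M} (h : (mpGraph N M).Adj x y) :
    0 ≤ reducedCost (mpW N M W a b c) (potential W) x y := by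
  change mpAdjB N M x y = true at h
  rcases x with ((i | j) | (k | l)) <;> rcases y with ((i' | j') | (k' | l')) <;>
    simp only [mpAdjB, mpW, potential, reducedCost] at h ⊢ <;> grind

theorem layer_le_of_reducedCost_lt (ha : ∀ l i, 0 ≤ a l i ∧ a l i ≤ W)
    (hb : ∀ l j, 0 ≤ b l j ∧ b l j ≤ W) (hc : ∀ k, 0 ≤ c k ∧ c k ≤ W) {x y : MPVert N M}
    (h : (mpGraph N M).Adj x y) (hlt : reducedCost (mpW N M W a b c) (potential W) x y < 2 * W) :
    layer x ≤ layer y := by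
  change mpAdjB N M x y = true at h
  rcases x with ((i | j) | (k | l)) <;> rcases y with ((i' | j') | (k' | l')) <;>
    simp only [mpAdjB, mpW, potential, reducedCost, layer] at h hlt ⊢ <;> grind

open SimpleGraph

theorem support_eq_of_isPath_from_vw (hN : 0 < N) {s t : MPVert N M}
    (ht : t = vw N M ⟨N - 1, by omega⟩) (q : (mpGraph N M).Walk s t) (hq : q.IsPath)
    (hmono : ∀ d ∈ q.darts, layer d.fst ≤ layer d.snd) {k : Fin N} (hs : s = vw N M k) :
    q.support = ((List.finRange N).drop k).map (vw N M) := by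
  induction q generalizing k with
  | nil =>
    obtain rfl : k = ⟨N - 1, by omega⟩ := by simpa [vw] using hs.symm.trans ht
    rw [List.finRange_drop_eq_cons (by omega), List.drop_eq_nil_of_le (by simp; omega)]
    simp [hs]
  | @cons _ y _ h q ih =>
    subst hs
    rw [Walk.cons_isPath_iff] at hq
    simp only [Walk.darts_cons, List.forall_mem_cons] at hmono
    have hadj : mpAdjB N M (vw N M k) y = true := h
    rcases y with ((i' | j') | (k' | l'))
    · simp [mpAdjB, vw] at hadj
    · simp [layer, vw] at hmono
    · have hsupp := ih ht hq.1 hmono.2 rfl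
      simp only [mpAdjB, vw, beq_iff_eq, Bool.or_eq_true] at hadj
      rcases hadj with hup | hdown
      · rw [Walk.support_cons, hsupp, List.finRange_drop_eq_cons k.isLt, hup]
        rfl
      · refine absurd ?_ hq.2
        rw [hsupp]
        exact List.mem_map_of_mem (List.mem_finRange_drop_iff.2 (by omega))
    · simp [mpAdjB, vw] at hadj

theorem support_eq_of_isPath_from_vv (hN : 0 < N) {s t : MPVert N M}
    (ht : t = vw N M ⟨N - 1, by omega⟩) (q : (mpGraph N M).Walk s t) (hq : q.IsPath)
    (hmono : ∀ d ∈ q.darts, layer d.fst ≤ layer d.snd) {j : Fin N} (hs : s = vv N M j) :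
    ∃ k : Fin N, q.support = (((List.finRange N).take (j + 1)).reverse).map (vv N M) ++
      ((List.finRange N).drop k).map (vw N M) := by
  induction q generalizing j with
  | nil => simp [vv, vw, ht] at hs
  | @cons _ y _ h q ih =>
    subst hs
    rw [Walk.cons_isPath_iff] at hq
    simp only [Walk.darts_cons, List.forall_mem_cons] at hmono
    have hadj : mpAdjB N M (vv N M j) y = true := h
    rcases y with ((i' | j') | (k' | l'))
    · simp [mpAdjB, vv] at hadj
    · obtain ⟨k, hsupp⟩ := ih ht hq.1 hmono.2 rfl
      simp only [mpAdjB, vv, beq_iff_eq, Bool.or_eq_true] at hadj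
      rcases hadj with hup | hdown
      · refine absurd ?_ hq.2
        rw [hsupp]
        exact List.mem_append_left _ (List.mem_map_of_mem
          (List.mem_reverse.2 (List.mem_finRange_take_iff.2 (by omega))))
      · have hj : j = ⟨j' + 1, by omega⟩ := Fin.ext hdown.symm
        refine ⟨k, ?_⟩
        rw [Walk.support_cons, hsupp, hj, List.finRange_take_add_one (k := j' + 1) (by omega)]
        simp only [List.reverse_append, List.map_append]
        rfl
    · simp only [mpAdjB, vv, beq_iff_eq] at hadj
      obtain rfl : j = ⟨0, hN⟩ := Fin.ext hadj
      refine ⟨k', ?_⟩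
      rw [Walk.support_cons, support_eq_of_isPath_from_vw hN ht q hq.1 hmono.2 rfl,
        List.finRange_take_add_one hN]
      simp [vv]
    · simp [layer, vv] at hmono

theorem support_eq_of_isPath_from_vx (hN : 0 < N) {s t : MPVert N M}
    (ht : t = vw N M ⟨N - 1, by omega⟩) (q : (mpGraph N M).Walk s t) (hq : q.IsPath)
    (hmono : ∀ d ∈ q.darts, layer d.fst ≤ layer d.snd) {l : Fin M} (hs : s = vx N M l) :
    ∃ j k : Fin N, q.support = vx N M l ::
      ((((List.finRange N).take (j + 1)).reverse).map (vv N M) ++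
        ((List.finRange N).drop k).map (vw N M)) := by
  cases q with
  | nil => simp [vx, vw, ht] at hs
  | @cons _ y _ h q =>
    subst hs
    rw [Walk.cons_isPath_iff] at hq
    simp only [Walk.darts_cons, List.forall_mem_cons] at hmono
    have hadj : mpAdjB N M (vx N M l) y = true := h
    rcases y with ((i' | j') | (k' | l'))
    · simp [layer, vx] at hmono
    · obtain ⟨k, hsupp⟩ := support_eq_of_isPath_from_vv hN ht q hq.1 hmono.2 rfl
      exact ⟨j', k, by rw [Walk.support_cons, hsupp]⟩
    · simp [mpAdjB, vx] at hadj
    · simp [mpAdjB, vx] at hadj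

/-- `hfresh` stands in for the part of the path before `u_m`, which climbed `u_0, …, u_{m-1}`. -/
theorem support_eq_of_isPath_from_vu (hN : 0 < N) {s t : MPVert N M}
    (ht : t = vw N M ⟨N - 1, by omega⟩) (q : (mpGraph N M).Walk s t) (hq : q.IsPath)
    (hmono : ∀ d ∈ q.darts, layer d.fst ≤ layer d.snd) {m : Fin N} (hs : s = vu N M m)
    (hfresh : ∀ i : Fin N, i < m → vu N M i ∉ q.support) :
    ∃ (l : Fin M) (i j k : Fin N), m ≤ i ∧ q.support =
      (((List.finRange N).drop m).take (i + 1 - m)).map (vu N M) ++ [vx N M l] ++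
        (((List.finRange N).take (j + 1)).reverse).map (vv N M) ++
        ((List.finRange N).drop k).map (vw N M) := by
  induction q generalizing m with
  | nil => simp [vu, vw, ht] at hs
  | @cons _ y _ h q ih =>
    subst hs
    rw [Walk.cons_isPath_iff] at hq
    simp only [Walk.darts_cons, List.forall_mem_cons] at hmono
    simp only [Walk.support_cons, List.mem_cons, not_or] at hfresh
    have hadj : mpAdjB N M (vu N M m) y = true := h
    rcases y with ((m' | j') | (k' | l'))
    · simp only [mpAdjB, vu, beq_iff_eq, Bool.or_eq_true] at hadj
      rcases hadj with hup | hdown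
      · have hfresh' : ∀ i : Fin N, i < m' → vu N M i ∉ q.support := by
          intro i hi
          rcases (show i < m ∨ i = m by omega) with hi | rfl
          · exact (hfresh i hi).2
          · exact hq.2
        obtain ⟨l, i, j, k, hmi, hsupp⟩ := ih ht hq.1 hmono.2 rfl hfresh'
        refine ⟨l, i, j, k, by omega, ?_⟩
        rw [Walk.support_cons, hsupp, List.finRange_drop_eq_cons m.isLt,
          show (i : ℕ) + 1 - m = (i + 1 - m') + 1 by omega, ← hup]
        simp [vu]
      · exact absurd (q.start_mem_support) (hfresh m' (by omega)).2
    · simp [mpAdjB, vu] at hadj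
    · simp [mpAdjB, vu] at hadj
    · obtain ⟨j, k, hsupp⟩ := support_eq_of_isPath_from_vx hN ht q hq.1 hmono.2 rfl
      refine ⟨l', m, j, k, le_rfl, ?_⟩
      rw [Walk.support_cons, hsupp, List.finRange_drop_eq_cons m.isLt]
      simp [vu]

end MaxPlusGadget

open MaxPlusGadget

/-- Every path from `u_0` to `w_{N−1}` in the max-plus gadget graph with
total weight strictly less than `15W` has vertex sequence
`u_0, …, u_i, x_ℓ, v_j, v_{j−1}, …, v_0, w_k, …, w_{N−1}` for some `ℓ, i, j, k`. -/
theorem stmt10 (N M : ℕ) (hN : 1 ≤ N) (W : ℤ)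
    (a b : Fin M → Fin N → ℤ) (c : Fin N → ℤ)
    (ha : ∀ l i, 0 ≤ a l i ∧ a l i ≤ W) (hb : ∀ l j, 0 ≤ b l j ∧ b l j ≤ W)
    (hc : ∀ k, 0 ≤ c k ∧ c k ≤ W)
    (p : (mpGraph N M).Walk (vu N M ⟨0, by omega⟩) (vw N M ⟨N - 1, by omega⟩))
    (hpath : p.IsPath) (hweight : walkWeight (mpW N M W a b c) p < 15 * W) :
    ∃ (l : Fin M) (i j k : Fin N),
      p.support = ((List.finRange N).take (i.val + 1)).map (vu N M) ++ [vx N M l] ++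
        (((List.finRange N).take (j.val + 1)).reverse).map (vv N M) ++
        ((List.finRange N).drop k.val).map (vw N M) := by
  have hslack : walkWeight (reducedCost (mpW N M W a b c) (potential W)) p < 2 * W := by
    have h := walkWeight_eq_sub_add_walkWeight_reducedCost (mpW N M W a b c) (potential W) p
    change _ = 13 * W - 0 + _ at h
    linarith
  have hmono : ∀ d ∈ p.darts, layer d.fst ≤ layer d.snd := fun d hd =>
    layer_le_of_reducedCost_lt ha hb hc d.adj <| lt_of_le_of_lt
      (weight_dart_le_walkWeight (fun _ _ => reducedCost_nonneg ha hb hc) p hd) hslack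
  obtain ⟨l, i, j, k, -, hsupp⟩ :=
    support_eq_of_isPath_from_vu hN rfl p hpath hmono rfl fun i hi => (Nat.not_lt_zero i hi).elim
  exact ⟨l, i, j, k, by simpa using hsupp⟩
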